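/- arXiv:2605.13304 — 3 statements merged into one kernel-verified Lean document; each statement's English description precedes it below -/
import Mathlib

section
/- Suppose (A,B) ∈ D with m ≥ 1 satisfies hypothesis (∗), j_1 ≥ 1, u⁻¹(b_{j_1−1}) < u⁻¹(b_{j_1}), and either j_m = h or a_{i_m+1} < b_{j_m+1}. Set B̄ := (b_{j_m+1}, a_{i_m+1})·B (the cycle obtained from B by inserting a_{i_m+1} between b_{j_m} and b_{j_m+1}) and Ā := (a_{i_1}, a_{i_1−1})·A (the cycle obtained from A by removing a_{i_1}). Then (B̄,Ā) ∈ D̄, B·A = Ā·B̄, and k + h = k̄ + h̄. -/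
/-!
Common setup: the symmetric group `S_n` (`n ≥ 2`) is modeled as `Equiv.Perm (Fin (n+2))`
(so every `n ≥ 2` is of the form `n+2` with `n : ℕ`).  The element `1` of `{1,…,n}` is
`0 : Fin (n+2)` and the element `n` is `Fin.last (n+1)`.
Composition of permutations is multiplication: `(C * C') x = C (C' x)`.
-/

open Equiv

namespace DblShortcut

variable {n : ℕ}

/-- The cycle `(n, a_k, …, a_1)` determined by the sequence `a_1, …, a_k`
(as `a : Fin k → Fin (n+2)`); when `k = 0` this is the identity. -/
def cycA {k : ℕ} (a : Fin k → Fin (n+2)) : Equiv.Perm (Fin (n+2)) :=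
  (Fin.last (n+1) :: (List.ofFn a).reverse).formPerm

/-- The cycle `(x, b_1, …, b_h)` determined by the base point `x` and the sequence
`b_1, …, b_h`; when `h = 0` this is the identity. -/
def cycB {h : ℕ} (x : Fin (n+2)) (b : Fin h → Fin (n+2)) : Equiv.Perm (Fin (n+2)) :=
  (x :: List.ofFn b).formPerm

/-- The length of the defining index sequence of a cycle as above:
`|support| - 1` (which is `0` for the identity, and `k` for `cycA a`, `h` for `cycB x b`). -/
def clen (C : Equiv.Perm (Fin (n+2))) : ℕ := C.support.card - 1

/-- The sequence `a_1, …, a_k` extended by `a_{k+1} := n`. -/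
def asnoc {k : ℕ} (a : Fin k → Fin (n+2)) : Fin (k+1) → Fin (n+2) :=
  Fin.snoc a (Fin.last (n+1))

/-- The sequence `b_1, …, b_h` prefixed by the base point `x` (`b_0 := x`). -/
def bcons {h : ℕ} (x : Fin (n+2)) (b : Fin h → Fin (n+2)) : Fin (h+1) → Fin (n+2) :=
  Fin.cons x b

/-- `a_t`, with the conventions `a_0 := n` and `a_{k+1} := n` (out-of-range values are `n`). -/
def aext {k : ℕ} (a : Fin k → Fin (n+2)) (t : ℕ) : Fin (n+2) :=
  if ht : 1 ≤ t ∧ t ≤ k then a ⟨t - 1, by omega⟩ else Fin.last (n+1)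

/-- `b_t`, with the conventions `b_0 := 1` and `b_{h+1} := 1` (out-of-range values are `1`). -/
def bext {h : ℕ} (b : Fin h → Fin (n+2)) (t : ℕ) : Fin (n+2) :=
  if ht : 1 ≤ t ∧ t ≤ h then b ⟨t - 1, by omega⟩ else 0

/-- Conditions (1) and (2) of the definition of `D` on the sequence `a_1 < … < a_k`:
`1 ≤ a_1 < … < a_k < n` and `v⁻¹(n) = u⁻¹(a_1) < u⁻¹(a_2) < … < u⁻¹(a_k) < u⁻¹(n)`
(with `v⁻¹(n) = u⁻¹(n)` when `k = 0`). -/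
def DCondA (u v : Perm (Fin (n+2))) {k : ℕ} (a : Fin k → Fin (n+2)) : Prop :=
  StrictMono a ∧ (∀ i, a i < Fin.last (n+1)) ∧
  v.symm (Fin.last (n+1)) = u.symm (asnoc a 0) ∧
  StrictMono fun i : Fin (k+1) => u.symm (asnoc a i)

/-- Conditions (3) and (4) of the definition of `D` on the sequence `b_1 < … < b_h`:
`1 < b_1 < … < b_h < n` and
`u⁻¹(A⁻¹(1)) < u⁻¹(A⁻¹(b_1)) < … < u⁻¹(A⁻¹(b_h)) = v⁻¹(1)`
(with `u⁻¹(A⁻¹(1)) = v⁻¹(1)` when `h = 0`). -/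
def DCondB (u v A : Perm (Fin (n+2))) {h : ℕ} (b : Fin h → Fin (n+2)) : Prop :=
  StrictMono b ∧ (∀ i, 0 < b i ∧ b i < Fin.last (n+1)) ∧
  (StrictMono fun i : Fin (h+1) => u.symm (A.symm (bcons 0 b i))) ∧
  u.symm (A.symm (bcons 0 b (Fin.last h))) = v.symm 0

/-- The set `D`: pairs `(A,B)` with `A = (n,a_k,…,a_1)`, `B = (1,b_1,…,b_h)`
satisfying conditions (1)–(4). -/
def memD (u v A B : Perm (Fin (n+2))) : Prop :=
  ∃ (k h : ℕ) (a : Fin k → Fin (n+2)) (b : Fin h → Fin (n+2)),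
    A = cycA a ∧ B = cycB 0 b ∧ DCondA u v a ∧ DCondB u v A b

/-- Conditions (a) and (b) of the definition of `D̄` on the sequence `b̄_1 < … < b̄_h̄`:
`1 < b̄_1 < … < b̄_h̄ ≤ n` and `u⁻¹(1) < u⁻¹(b̄_1) < … < u⁻¹(b̄_h̄) = v⁻¹(1)`
(with `u⁻¹(1) = v⁻¹(1)` when `h̄ = 0`). -/
def DbarCondB (u v : Perm (Fin (n+2))) {h : ℕ} (b : Fin h → Fin (n+2)) : Prop :=
  StrictMono b ∧ (∀ i, 0 < b i) ∧
  (StrictMono fun i : Fin (h+1) => u.symm (bcons 0 b i)) ∧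
  u.symm (bcons 0 b (Fin.last h)) = v.symm 0

/-- Conditions (c) and (d) of the definition of `D̄` on the sequence `ā_1 < … < ā_k̄`:
`1 ≤ ā_1 < … < ā_k̄ < n` and
`v⁻¹(n) = u⁻¹(B̄⁻¹(ā_1)) < … < u⁻¹(B̄⁻¹(ā_k̄)) < u⁻¹(B̄⁻¹(n))`
(with `v⁻¹(n) = u⁻¹(B̄⁻¹(n))` when `k̄ = 0`). -/
def DbarCondA (u v Bbar : Perm (Fin (n+2))) {k : ℕ} (a : Fin k → Fin (n+2)) : Prop :=
  StrictMono a ∧ (∀ i, a i < Fin.last (n+1)) ∧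
  v.symm (Fin.last (n+1)) = u.symm (Bbar.symm (asnoc a 0)) ∧
  StrictMono fun i : Fin (k+1) => u.symm (Bbar.symm (asnoc a i))

/-- The set `D̄`: pairs `(B̄,Ā)` with `B̄ = (1,b̄_1,…,b̄_h̄)`, `Ā = (n,ā_k̄,…,ā_1)`
satisfying conditions (a)–(d). -/
def memDbar (u v Bbar Abar : Perm (Fin (n+2))) : Prop :=
  ∃ (h k : ℕ) (b : Fin h → Fin (n+2)) (a : Fin k → Fin (n+2)),
    Bbar = cycB 0 b ∧ Abar = cycA a ∧ DbarCondB u v b ∧ DbarCondA u v Bbar a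

end DblShortcut

namespace DblShortcut

/-- Intersection data for `(A,B) ∈ D` with `m := |A_s ∩ B_s|`:
`A_s ∩ B_s = {c_1 < … < c_m}` and `c_l = a_{i_l} = b_{j_l}` with
`i_1 < … < i_m` in `{1,…,k}` and `j_1 < … < j_m` in `{0,1,…,h}`
(conventions `a_0 := n`, `b_0 := 1`, `a_{k+1} := n`, `b_{h+1} := 1`). -/
def InterD {n k h : ℕ} (a : Fin k → Fin (n+2)) (b : Fin h → Fin (n+2))
    {m : ℕ} (i j : Fin m → ℕ) : Prop :=
  StrictMono i ∧ StrictMono j ∧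
  (∀ l, 1 ≤ i l ∧ i l ≤ k) ∧ (∀ l, j l ≤ h) ∧
  (∀ l, aext a (i l) = bext b (j l)) ∧
  (cycA a).support ∩ (cycB 0 b).support
    = Finset.image (fun l => aext a (i l)) Finset.univ

/-- Intersection data for `(B̄,Ā) ∈ D̄` with `m := |Ā_s ∩ B̄_s|`:
`Ā_s ∩ B̄_s = {c̄_1 < … < c̄_m}` and `c̄_l = ā_{i_l} = b̄_{j_l}` with
`i_1 < … < i_m` in `{1,…,k̄+1}` and `j_1 < … < j_m` in `{1,…,h̄}`
(conventions `ā_0 := n`, `b̄_0 := 1`, `ā_{k̄+1} := n`, `b̄_{h̄+1} := 1`). -/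
def InterDbar {n h k : ℕ} (b : Fin h → Fin (n+2)) (a : Fin k → Fin (n+2))
    {m : ℕ} (i j : Fin m → ℕ) : Prop :=
  StrictMono i ∧ StrictMono j ∧
  (∀ l, 1 ≤ i l ∧ i l ≤ k + 1) ∧ (∀ l, 1 ≤ j l ∧ j l ≤ h) ∧
  (∀ l, aext a (i l) = bext b (j l)) ∧
  (cycA a).support ∩ (cycB 0 b).support
    = Finset.image (fun l => aext a (i l)) Finset.univ

/-- Hypothesis (∗) (resp. (∗∗)): consecutive intersection indices differ by `1`,
i.e. `i_{r+1} − i_r = 1` and `j_{r+1} − j_r = 1` for all `r ∈ {1,…,m−1}`. -/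
def StarHyp {m : ℕ} (i j : Fin m → ℕ) : Prop :=
  ∀ l : Fin m, ∀ hl : l.1 + 1 < m,
    i ⟨l.1 + 1, hl⟩ = i l + 1 ∧ j ⟨l.1 + 1, hl⟩ = j l + 1

end DblShortcut

namespace DblShortcut

section Basics
variable {k h : ℕ} {a : Fin k → Fin (n+2)} {b : Fin h → Fin (n+2)}

lemma bext_eq {t : ℕ} (h1 : 1 ≤ t) (h2 : t ≤ h) : bext b t = b ⟨t-1, by omega⟩ :=
  dif_pos ⟨h1, h2⟩

lemma aext_eq {t : ℕ} (h1 : 1 ≤ t) (h2 : t ≤ k) : aext a t = a ⟨t-1, by omega⟩ :=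
  dif_pos ⟨h1, h2⟩

lemma bext_of_ge {t : ℕ} (ht : h < t) : bext b t = 0 := by
  simp [bext]; omega

lemma bext_zero : bext b 0 = 0 := by simp [bext]

lemma aext_of_ge {t : ℕ} (ht : k < t) : aext a t = Fin.last (n+1) := by
  simp [aext]; omega

lemma aext_zero : aext a 0 = Fin.last (n+1) := by simp [aext]

lemma bcons_zero_eq_bext (i : Fin (h+1)) : bcons (0 : Fin (n+2)) b i = bext b i.1 := by
  rcases i with ⟨s, hs⟩
  cases s with
  | zero => simp [bcons, bext]
  | succ s =>
    have hrw : (⟨s+1, hs⟩ : Fin (h+1)) = Fin.succ ⟨s, by omega⟩ := rfl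
    simp only [bcons, bext, hrw, Fin.cons_succ]
    rw [dif_pos ⟨by omega, by omega⟩]
    congr 1

lemma asnoc_eq_aext (i : Fin (k+1)) : asnoc a i = aext a (i.1+1) := by
  rcases i with ⟨s, hs⟩
  rcases Nat.lt_or_ge s k with hsk | hsk
  · have hrw : (⟨s, hs⟩ : Fin (k+1)) = Fin.castSucc ⟨s, hsk⟩ := rfl
    simp only [asnoc, aext, hrw, Fin.snoc_castSucc]
    rw [dif_pos ⟨by omega, by omega⟩]
    congr 1
  · have hsk' : s = k := by omega
    subst hsk'
    have hrw : (⟨s, hs⟩ : Fin (s+1)) = Fin.last s := rfl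
    simp only [asnoc, hrw, Fin.snoc_last]
    rw [aext_of_ge (by omega)]

lemma bext_pos (hb0 : ∀ i, 0 < b i) {t : ℕ} (h1 : 1 ≤ t) (h2 : t ≤ h) : 0 < bext b t := by
  simp only [bext, dif_pos (⟨h1, h2⟩ : 1 ≤ t ∧ t ≤ h)]
  exact hb0 _

lemma bext_lt_bext (hb : StrictMono b) (hb0 : ∀ i, 0 < b i) {s t : ℕ}
    (hst : s < t) (ht : t ≤ h) : bext b s < bext b t := by
  have htp : bext b t = b ⟨t-1, by omega⟩ := bext_eq (by omega) (by omega)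
  cases Nat.eq_zero_or_pos s with
  | inl hs => rw [hs, bext_zero, htp]; exact hb0 _
  | inr hs =>
    have hsp : bext b s = b ⟨s-1, by omega⟩ := bext_eq (by omega) (by omega)
    rw [hsp, htp]
    exact hb (by simp [Fin.lt_def]; omega)

lemma bext_lt_last (hbL : ∀ i, b i < Fin.last (n+1)) (t : ℕ) :
    bext b t < Fin.last (n+1) := by
  by_cases ht : 1 ≤ t ∧ t ≤ h
  · simp only [bext, dif_pos ht]; exact hbL _
  · simp only [bext, dif_neg ht]
    simp [Fin.lt_def, Fin.last]

lemma aext_lt_aext (ha : StrictMono a) (haL : ∀ i, a i < Fin.last (n+1)) {s t : ℕ}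
    (h1 : 1 ≤ s) (hst : s < t) (ht : t ≤ k+1) : aext a s < aext a t := by
  have hsp : aext a s = a ⟨s-1, by omega⟩ := aext_eq (by omega) (by omega)
  rcases Nat.lt_or_ge t (k+1) with htk | htk
  · have htp : aext a t = a ⟨t-1, by omega⟩ := aext_eq (by omega) (by omega)
    rw [hsp, htp]
    exact ha (by simp [Fin.lt_def]; omega)
  · rw [hsp, show aext a t = Fin.last (n+1) from aext_of_ge (by omega)]
    exact haL _

lemma aext_inj (ha : StrictMono a) (haL : ∀ i, a i < Fin.last (n+1)) {s t : ℕ}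
    (h1 : 1 ≤ s) (hs : s ≤ k+1) (h1' : 1 ≤ t) (ht : t ≤ k+1)
    (heq : aext a s = aext a t) : s = t := by
  rcases Nat.lt_trichotomy s t with hlt | he | hgt
  · exact absurd heq (ne_of_lt (aext_lt_aext ha haL h1 hlt ht))
  · exact he
  · exact absurd heq.symm (ne_of_lt (aext_lt_aext ha haL h1' hgt hs))

lemma bext_inj (hb : StrictMono b) (hb0 : ∀ i, 0 < b i) {s t : ℕ}
    (hs : s ≤ h) (ht : t ≤ h) (heq : bext b s = bext b t) : s = t := by
  rcases Nat.lt_trichotomy s t with hlt | he | hgt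
  · exact absurd heq (ne_of_lt (bext_lt_bext hb hb0 hlt ht))
  · exact he
  · exact absurd heq.symm (ne_of_lt (bext_lt_bext hb hb0 hgt hs))

end Basics

section Cyc
variable {k h : ℕ} {a : Fin k → Fin (n+2)} {b : Fin h → Fin (n+2)}

lemma listB_getElem {s : ℕ} (hs : s < h+1) :
    ((0 : Fin (n+2)) :: List.ofFn b)[s]'(by simp [hs]) = bext b s := by
  cases s with
  | zero => simp [bext_zero]
  | succ s =>
    simp only [List.getElem_cons_succ, List.getElem_ofFn]
    rw [bext_eq (by omega) (by omega)]
    congr 1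

lemma mem_listB_iff {x : Fin (n+2)} :
    x ∈ ((0 : Fin (n+2)) :: List.ofFn b) ↔ ∃ t, t ≤ h ∧ x = bext b t := by
  rw [List.mem_cons]
  constructor
  · rintro (rfl | hx)
    · exact ⟨0, by omega, bext_zero.symm⟩
    · rw [List.mem_ofFn] at hx
      obtain ⟨i, hi⟩ := hx
      exact ⟨i.1+1, by omega, by rw [bext_eq (by omega) (by omega)]; simp [← hi]⟩
  · rintro ⟨t, ht, rfl⟩
    by_cases h1 : 1 ≤ t
    · rw [bext_eq h1 ht]
      exact Or.inr (by rw [List.mem_ofFn]; exact ⟨_, rfl⟩)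
    · have h0 : t = 0 := by omega
      rw [h0, bext_zero]; exact Or.inl rfl

lemma nodupB (hb : StrictMono b) (hb0 : ∀ i, 0 < b i) :
    ((0 : Fin (n+2)) :: List.ofFn b).Nodup := by
  refine List.nodup_cons.mpr ⟨?_, List.nodup_ofFn.mpr hb.injective⟩
  rw [List.mem_ofFn]
  rintro ⟨i, hi⟩
  exact (hb0 i).ne' hi

lemma cycB_bext (hb : StrictMono b) (hb0 : ∀ i, 0 < b i) {t : ℕ} (ht : t ≤ h) :
    cycB 0 b (bext b t) = bext b (t+1) := by
  have hnd := nodupB hb hb0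
  rw [cycB, show bext b t = ((0 : Fin (n+2)) :: List.ofFn b)[t]'(by simp; omega) from
    (listB_getElem (by omega)).symm,
    List.formPerm_apply_getElem _ hnd t (by simp; omega)]
  simp only [List.length_cons, List.length_ofFn]
  rcases Nat.lt_or_ge t h with h1 | h1
  · simp only [Nat.mod_eq_of_lt (show t+1 < h+1 by omega)]
    exact listB_getElem (by omega)
  · have ht' : t = h := by omega
    subst ht'
    simp only [Nat.mod_self]
    rw [bext_of_ge (by omega)]
    exact listB_getElem (by omega)

lemma cycB_fix {x : Fin (n+2)} (hx : ∀ t, t ≤ h → x ≠ bext b t) :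
    cycB 0 b x = x := by
  apply List.formPerm_apply_of_notMem
  rw [mem_listB_iff]
  rintro ⟨t, ht, rfl⟩
  exact hx t ht rfl

lemma symm_fix {f : Equiv.Perm (Fin (n+2))} {x : Fin (n+2)} (hx : f x = x) :
    f.symm x = x := by
  conv_lhs => rw [← hx]
  exact f.symm_apply_apply x

lemma cycB_symm_bext (hb : StrictMono b) (hb0 : ∀ i, 0 < b i) {t : ℕ}
    (h1 : 1 ≤ t) (ht : t ≤ h+1) : (cycB 0 b).symm (bext b t) = bext b (t-1) := by
  have := cycB_bext (b := b) hb hb0 (t := t-1) (by omega)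
  rw [show t-1+1 = t by omega] at this
  rw [← this, Equiv.symm_apply_apply]

lemma mem_support_cycB (hb : StrictMono b) (hb0 : ∀ i, 0 < b i) (hh : 1 ≤ h)
    {x : Fin (n+2)} :
    x ∈ (cycB 0 b).support ↔ ∃ t, t ≤ h ∧ x = bext b t := by
  rw [cycB, List.support_formPerm_of_nodup _ (nodupB hb hb0)
    (by intro y hy; have := congrArg List.length hy; simp at this; omega),
    List.mem_toFinset, mem_listB_iff]

lemma card_support_cycB (hb : StrictMono b) (hb0 : ∀ i, 0 < b i) (hh : 1 ≤ h) :
    (cycB 0 b).support.card = h + 1 := by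
  rw [cycB, List.support_formPerm_of_nodup _ (nodupB hb hb0)
    (by intro y hy; have := congrArg List.length hy; simp at this; omega),
    List.toFinset_card_of_nodup (nodupB hb hb0)]
  simp

lemma listA_getElem {s : ℕ} (hs : s < k+1) :
    (Fin.last (n+1) :: (List.ofFn a).reverse)[s]'(by simp [hs]) = aext a (k+1-s) := by
  cases s with
  | zero => simp [aext_of_ge (show k < k+1 by omega)]
  | succ s =>
    simp only [List.getElem_cons_succ, List.getElem_reverse, List.length_ofFn,
      List.getElem_ofFn]
    rw [aext_eq (by omega) (by omega)]
    congr 1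
    simp
    omega

lemma mem_listA_iff {x : Fin (n+2)} :
    x ∈ (Fin.last (n+1) :: (List.ofFn a).reverse) ↔
      ∃ t, 1 ≤ t ∧ t ≤ k+1 ∧ x = aext a t := by
  rw [List.mem_cons]
  constructor
  · rintro (rfl | hx)
    · exact ⟨k+1, by omega, by omega, (aext_of_ge (by omega)).symm⟩
    · rw [List.mem_reverse, List.mem_ofFn] at hx
      obtain ⟨i, hi⟩ := hx
      exact ⟨i.1+1, by omega, by omega, by rw [aext_eq (by omega) (by omega)]; simp [← hi]⟩
  · rintro ⟨t, h1, ht, rfl⟩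
    by_cases h2 : t ≤ k
    · rw [aext_eq h1 h2]
      exact Or.inr (by
        rw [List.mem_reverse, List.mem_ofFn]; exact ⟨_, rfl⟩)
    · rw [aext_of_ge (by omega)]; exact Or.inl rfl

lemma nodupA (ha : StrictMono a) (haL : ∀ i, a i < Fin.last (n+1)) :
    (Fin.last (n+1) :: (List.ofFn a).reverse).Nodup := by
  refine List.nodup_cons.mpr ⟨?_, List.nodup_reverse.mpr (List.nodup_ofFn.mpr ha.injective)⟩
  rw [List.mem_reverse, List.mem_ofFn]
  rintro ⟨i, hi⟩
  exact absurd hi (ne_of_lt (haL i))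

lemma cycA_aext (ha : StrictMono a) (haL : ∀ i, a i < Fin.last (n+1)) {t : ℕ}
    (h1 : 1 ≤ t) (ht : t ≤ k+1) : cycA a (aext a t) = aext a (t-1) := by
  have hnd := nodupA ha haL
  rw [cycA, show aext a t = (Fin.last (n+1) :: (List.ofFn a).reverse)[k+1-t]'(by simp; omega)
      from by rw [listA_getElem (by omega)]; congr 1; omega,
    List.formPerm_apply_getElem _ hnd _ (by simp; omega)]
  simp only [List.length_cons, List.length_reverse, List.length_ofFn]
  rcases Nat.lt_or_ge 1 t with h2 | h2
  · simp only [Nat.mod_eq_of_lt (show k+1-t+1 < k+1 by omega)]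
    rw [listA_getElem (by omega)]
    congr 1
    omega
  · have ht' : t = 1 := by omega
    subst ht'
    rw [show k+1-1+1 = k+1 by omega]
    simp only [Nat.mod_self]
    rw [show (1:ℕ)-1 = 0 from rfl, aext_zero]
    have := listA_getElem (a := a) (s := 0) (by omega)
    rw [this, aext_of_ge (by omega)]

lemma cycA_symm_aext (ha : StrictMono a) (haL : ∀ i, a i < Fin.last (n+1)) {t : ℕ}
    (ht : t ≤ k) : (cycA a).symm (aext a t) = aext a (t+1) := by
  have := cycA_aext (a := a) ha haL (t := t+1) (by omega) (by omega)
  rw [show t+1-1 = t by omega] at this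
  rw [← this, Equiv.symm_apply_apply]

lemma cycA_fix {x : Fin (n+2)} (hx : ∀ t, 1 ≤ t → t ≤ k+1 → x ≠ aext a t) :
    cycA a x = x := by
  apply List.formPerm_apply_of_notMem
  rw [mem_listA_iff]
  rintro ⟨t, h1, ht, rfl⟩
  exact hx t h1 ht rfl

lemma mem_support_cycA (ha : StrictMono a) (haL : ∀ i, a i < Fin.last (n+1)) (hk : 1 ≤ k)
    {x : Fin (n+2)} :
    x ∈ (cycA a).support ↔ ∃ t, 1 ≤ t ∧ t ≤ k+1 ∧ x = aext a t := by
  rw [cycA, List.support_formPerm_of_nodup _ (nodupA ha haL)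
    (by intro y hy; have := congrArg List.length hy; simp at this; omega),
    List.mem_toFinset, mem_listA_iff]

lemma card_support_cycA (ha : StrictMono a) (haL : ∀ i, a i < Fin.last (n+1)) (hk : 1 ≤ k) :
    (cycA a).support.card = k + 1 := by
  rw [cycA, List.support_formPerm_of_nodup _ (nodupA ha haL)
    (by intro y hy; have := congrArg List.length hy; simp at this; omega),
    List.toFinset_card_of_nodup (nodupA ha haL)]
  simp

end Cyc

section Surgery
variable {k h : ℕ} {a : Fin k → Fin (n+2)} {b : Fin h → Fin (n+2)}

lemma strictMono_fin_succ {N : ℕ} {α : Type*} [Preorder α] {g : Fin (N+1) → α}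
    (H : ∀ s : ℕ, (hs : s < N) → g ⟨s, by omega⟩ < g ⟨s+1, by omega⟩) : StrictMono g := by
  rw [Fin.strictMono_iff_lt_succ]
  intro i
  exact H i.1 i.2

lemma strictMono_of_bext {f : Fin h → Fin (n+2)}
    (H : ∀ s t, 1 ≤ s → s < t → t ≤ h → bext f s < bext f t) : StrictMono f := by
  intro p q hpq
  have := H (p.1+1) (q.1+1) (by omega) (by omega) (by omega)
  rwa [bext_eq (by omega) (by omega), bext_eq (by omega) (by omega)] at this

lemma strictMono_of_aext {f : Fin k → Fin (n+2)}
    (H : ∀ s t, 1 ≤ s → s < t → t ≤ k → aext f s < aext f t) : StrictMono f := by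
  intro p q hpq
  have := H (p.1+1) (q.1+1) (by omega) (by omega) (by omega)
  rwa [aext_eq (by omega) (by omega), aext_eq (by omega) (by omega)] at this

/-- Insertion of `z` right after position `J` in the cycle data `b`. -/
def insb {h : ℕ} (b : Fin h → Fin (n+2)) (J : ℕ) (z : Fin (n+2)) :
    Fin (h+1) → Fin (n+2) :=
  fun t => if t.1+1 ≤ J then bext b (t.1+1) else if t.1 = J then z else bext b t.1

/-- Deletion of position `I` from the cycle data `a`. -/
def dela {k : ℕ} (a : Fin k → Fin (n+2)) (I : ℕ) : Fin (k-1) → Fin (n+2) :=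
  fun t => if t.1+1 < I then aext a (t.1+1) else aext a (t.1+2)

lemma bext_insb {J : ℕ} {z : Fin (n+2)} (hJh : J ≤ h) (t : ℕ) :
    bext (insb b J z) t =
      if t ≤ J then bext b t else if t = J+1 then z else bext b (t-1) := by
  rcases Nat.eq_zero_or_pos t with rfl | ht1
  · rw [bext_zero, if_pos (by omega), bext_zero]
  rcases Nat.lt_or_ge (h+1) t with ht2 | ht2
  · rw [bext_of_ge (by omega), if_neg (by omega), if_neg (by omega),
      bext_of_ge (by omega)]
  · rw [bext_eq ht1 (by omega)]
    show (if t-1+1 ≤ J then bext b (t-1+1) else if t-1 = J then z else bext b (t-1)) = _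
    rw [show t-1+1 = t by omega]
    by_cases hc1 : t ≤ J
    · rw [if_pos hc1, if_pos hc1]
    · rw [if_neg hc1, if_neg hc1]
      by_cases hc2 : t = J+1
      · rw [if_pos (by omega), if_pos hc2]
      · rw [if_neg (by omega), if_neg hc2]

lemma aext_dela {I : ℕ} (hI1 : 1 ≤ I) (hIk : I ≤ k) (t : ℕ) (ht1 : 1 ≤ t) :
    aext (dela a I) t = if t < I then aext a t else aext a (t+1) := by
  rcases Nat.lt_or_ge t k with ht2 | ht2
  · rw [aext_eq ht1 (by omega)]
    show (if t-1+1 < I then aext a (t-1+1) else aext a (t-1+2)) = _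
    rw [show t-1+1 = t by omega, show t-1+2 = t+1 by omega]
  · rw [aext_of_ge (by omega), if_neg (by omega), aext_of_ge (by omega)]

lemma insb_strictMono {J : ℕ} {z : Fin (n+2)} (hb : StrictMono b) (hb0 : ∀ i, 0 < b i)
    (hJ1 : 1 ≤ J) (hJh : J ≤ h) (hz1 : bext b J < z)
    (hz2 : ∀ s, J+1 ≤ s → s ≤ h → z < bext b s) :
    StrictMono (insb b J z) := by
  apply strictMono_of_bext
  intro s t hs hst ht
  rw [bext_insb hJh, bext_insb hJh]
  by_cases hc1 : s ≤ J
  · rw [if_pos hc1]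
    by_cases hc2 : t ≤ J
    · rw [if_pos hc2]; exact bext_lt_bext hb hb0 hst (by omega)
    · rw [if_neg hc2]
      by_cases hc3 : t = J+1
      · rw [if_pos hc3]
        rcases Nat.lt_or_ge s J with hc4 | hc4
        · exact lt_trans (bext_lt_bext hb hb0 hc4 hJh) hz1
        · rw [show s = J by omega]; exact hz1
      · rw [if_neg hc3]; exact bext_lt_bext hb hb0 (by omega) (by omega)
  · rw [if_neg hc1]
    have hc2 : ¬ t ≤ J := by omega
    rw [if_neg hc2]
    by_cases hc3 : s = J+1
    · rw [if_pos hc3, if_neg (by omega)]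
      exact hz2 (t-1) (by omega) (by omega)
    · rw [if_neg hc3, if_neg (by omega)]
      exact bext_lt_bext hb hb0 (by omega) (by omega)

lemma insb_pos {J : ℕ} {z : Fin (n+2)} (hb0 : ∀ i, 0 < b i)
    (hJ1 : 1 ≤ J) (hJh : J ≤ h) (hz1 : bext b J < z) :
    ∀ i, 0 < insb b J z i := by
  intro i
  have heq : insb b J z i = bext (insb b J z) (i.1+1) := by
    rw [bext_eq (by omega) (by omega)]
    congr 1
  rw [heq, bext_insb hJh]
  by_cases hc1 : i.1+1 ≤ J
  · rw [if_pos hc1]; exact bext_pos hb0 (by omega) (by omega)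
  · rw [if_neg hc1]
    by_cases hc2 : i.1+1 = J+1
    · rw [if_pos hc2]
      exact lt_of_le_of_lt (Fin.zero_le _) hz1
    · rw [if_neg hc2]; exact bext_pos hb0 (by omega) (by omega)

lemma dela_strictMono {I : ℕ} (ha : StrictMono a) (haL : ∀ i, a i < Fin.last (n+1))
    (hI1 : 1 ≤ I) (hIk : I ≤ k) : StrictMono (dela a I) := by
  apply strictMono_of_aext
  intro s t hs hst ht
  rw [aext_dela hI1 hIk s hs, aext_dela hI1 hIk t (by omega)]
  by_cases hc1 : s < I
  · rw [if_pos hc1]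
    by_cases hc2 : t < I
    · rw [if_pos hc2]; exact aext_lt_aext ha haL hs hst (by omega)
    · rw [if_neg hc2]; exact aext_lt_aext ha haL hs (by omega) (by omega)
  · rw [if_neg hc1, if_neg (by omega)]
    exact aext_lt_aext ha haL (by omega) (by omega) (by omega)

lemma dela_lt_last {I : ℕ} (ha : StrictMono a) (haL : ∀ i, a i < Fin.last (n+1))
    (hI1 : 1 ≤ I) (hIk : I ≤ k) : ∀ i, dela a I i < Fin.last (n+1) := by
  intro i
  have heq : dela a I i = aext (dela a I) (i.1+1) := by
    rw [aext_eq (by omega) (by omega)]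
    congr 1
  rw [heq, aext_dela hI1 hIk _ (by omega)]
  by_cases hc1 : i.1+1 < I
  · rw [if_pos hc1, aext_eq (by omega) (by omega)]; exact haL _
  · rw [if_neg hc1, aext_eq (by omega) (by omega)]; exact haL _

end Surgery

section Surgery2
variable {k h : ℕ} {a : Fin k → Fin (n+2)} {b : Fin h → Fin (n+2)}

lemma aext_ne (ha : StrictMono a) (haL : ∀ i, a i < Fin.last (n+1)) {s t : ℕ}
    (h1 : 1 ≤ s) (hs : s ≤ k+1) (h1' : 1 ≤ t) (ht : t ≤ k+1) (hne : s ≠ t) :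
    aext a s ≠ aext a t :=
  fun heq => hne (aext_inj ha haL h1 hs h1' ht heq)

lemma bext_ne (hb : StrictMono b) (hb0 : ∀ i, 0 < b i) {s t : ℕ}
    (hs : s ≤ h) (ht : t ≤ h) (hne : s ≠ t) : bext b s ≠ bext b t :=
  fun heq => hne (bext_inj hb hb0 hs ht heq)

lemma cycB_insert_eq {J : ℕ} {z : Fin (n+2)} (hb : StrictMono b) (hb0 : ∀ i, 0 < b i)
    (hJ1 : 1 ≤ J) (hJh : J ≤ h) (hz1 : bext b J < z)
    (hz2 : ∀ s, J+1 ≤ s → s ≤ h → z < bext b s) :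
    cycB 0 (insb b J z) = Equiv.swap (bext b (J+1)) z * cycB 0 b := by
  have hbb := insb_strictMono hb hb0 hJ1 hJh hz1 hz2
  have hbb0 := insb_pos hb0 hJ1 hJh hz1
  have hzne : ∀ s, s ≤ h → z ≠ bext b s := by
    intro s hs
    rcases Nat.lt_or_ge J s with hc | hc
    · exact (hz2 s (by omega) hs).ne
    · rcases Nat.eq_zero_or_pos s with rfl | hs1
      · rw [bext_zero]
        exact ne_of_gt (lt_of_le_of_lt (Fin.zero_le _) hz1)
      · rcases Nat.lt_or_ge s J with hc2 | hc2
        · exact (lt_trans (bext_lt_bext hb hb0 hc2 hJh) hz1).ne'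
        · rw [show s = J by omega]; exact hz1.ne'
  apply Equiv.ext
  intro x
  rw [Equiv.Perm.mul_apply]
  by_cases hx : ∃ t, t ≤ h+1 ∧ x = bext (insb b J z) t
  · obtain ⟨t, ht, rfl⟩ := hx
    rw [cycB_bext hbb hbb0 ht, bext_insb (z := z) hJh (t+1), bext_insb (z := z) hJh t]
    by_cases ht1 : t ≤ J
    · rw [if_pos ht1, cycB_bext hb hb0 (by omega)]
      by_cases ht2 : t < J
      · rw [if_pos (show t+1 ≤ J by omega)]
        have h1 : bext b (t+1) ≠ bext b (J+1) := by
          intro heq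
          rcases Nat.lt_or_ge (J+1) (h+1) with hc | hc
          · exact bext_ne (s := t+1) (t := J+1) hb hb0 (by omega) (by omega) (by omega) heq
          · rw [bext_of_ge (show h < J+1 by omega)] at heq
            exact (bext_pos (t := t+1) hb0 (by omega) (by omega)).ne' heq
        have h2 : bext b (t+1) ≠ z := fun heq => hzne (t+1) (by omega) heq.symm
        rw [Equiv.swap_apply_of_ne_of_ne h1 h2]
      · rw [if_neg (by omega), if_pos (show t+1 = J+1 by omega),
          show t = J by omega, Equiv.swap_apply_left]
    · rw [if_neg ht1]
      by_cases ht2 : t = J+1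
      · rw [if_pos ht2, if_neg (by omega), if_neg (by omega), show t+1-1 = t by omega, ht2,
          cycB_fix (fun s hs => hzne s hs), Equiv.swap_apply_right]
      · rw [if_neg ht2, if_neg (by omega), if_neg (by omega), show t+1-1 = t by omega,
          cycB_bext hb hb0 (show t-1 ≤ h by omega), show t-1+1 = t by omega]
        have h1 : bext b t ≠ bext b (J+1) := by
          intro heq
          rcases Nat.lt_or_ge t (h+1) with hc | hc
          · exact bext_ne (s := t) (t := J+1) hb hb0 (by omega) (by omega) (by omega) heq
          · rw [bext_of_ge (show h < t by omega)] at heq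
            exact (bext_pos (t := J+1) hb0 (by omega) (by omega)).ne' heq.symm
        have h2 : bext b t ≠ z := by
          rcases Nat.lt_or_ge h t with hc | hc
          · rw [bext_of_ge hc]
            exact (lt_of_le_of_lt (Fin.zero_le _) hz1).ne
          · exact fun heq => hzne t hc heq.symm
        rw [Equiv.swap_apply_of_ne_of_ne h1 h2]
  · push_neg at hx
    have hfixb : ∀ s, s ≤ h → x ≠ bext b s := by
      intro s hs
      rcases Nat.lt_or_ge J s with hc | hc
      · have := hx (s+1) (by omega)
        rwa [bext_insb (z := z) hJh (s+1), if_neg (by omega), if_neg (by omega),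
          show s+1-1 = s by omega] at this
      · have := hx s (by omega)
        rwa [bext_insb (z := z) hJh s, if_pos hc] at this
    have h1 : x ≠ bext b (J+1) := by
      rcases Nat.lt_or_ge (J+1) (h+1) with hc | hc
      · exact hfixb (J+1) (by omega)
      · rw [bext_of_ge (show h < J+1 by omega), ← bext_zero (b := b)]
        exact hfixb 0 (by omega)
    have h2 : x ≠ z := by
      have := hx (J+1) (by omega)
      rwa [bext_insb (z := z) hJh (J+1), if_neg (by omega), if_pos rfl] at this
    rw [cycB_fix (fun s hs => hx s (by omega)), cycB_fix hfixb,
      Equiv.swap_apply_of_ne_of_ne h1 h2]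

lemma card_support_cycA_if (ha : StrictMono a) (haL : ∀ i, a i < Fin.last (n+1)) :
    (cycA a).support.card = if k = 0 then 0 else k + 1 := by
  rcases Nat.eq_zero_or_pos k with hk | hk
  · subst hk
    rw [if_pos rfl]
    have h1 : cycA a = 1 := by
      rw [cycA, List.ofFn_zero]
      simp
    rw [h1]
    simp
  · rw [if_neg (by omega)]
    exact card_support_cycA ha haL hk

lemma cycA_delete_eq {I : ℕ} (ha : StrictMono a) (haL : ∀ i, a i < Fin.last (n+1))
    (hI1 : 1 ≤ I) (hIk : I ≤ k) :
    cycA (dela a I) = Equiv.swap (aext a I) (aext a (I-1)) * cycA a := by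
  have hda := dela_strictMono ha haL hI1 hIk
  have hdaL := dela_lt_last ha haL hI1 hIk
  have hIlast : aext a I < Fin.last (n+1) := by rw [aext_eq hI1 hIk]; exact haL _
  have haextL : ∀ t, 1 ≤ t → t ≤ k → aext a t < Fin.last (n+1) := by
    intro t h1 h2; rw [aext_eq h1 h2]; exact haL _
  apply Equiv.ext
  intro x
  rw [Equiv.Perm.mul_apply]
  by_cases hx : ∃ t, 1 ≤ t ∧ t ≤ k+1 ∧ x = aext a t
  · obtain ⟨t, h1t, htk, rfl⟩ := hx
    rw [cycA_aext ha haL h1t htk]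
    by_cases hc1 : t = I
    · rw [hc1, Equiv.swap_apply_right]
      apply cycA_fix
      intro t' h1t' ht'
      rw [aext_dela hI1 hIk t' h1t']
      by_cases hc : t' < I
      · rw [if_pos hc]
        exact aext_ne (s := I) (t := t') ha haL hI1 (by omega) h1t' (by omega) (by omega)
      · rw [if_neg hc]
        exact aext_ne (s := I) (t := t'+1) ha haL hI1 (by omega) (by omega) (by omega)
          (by omega)
    · by_cases hc2 : t = I+1
      · have harg : aext a t = aext (dela a I) I := by
          rw [aext_dela hI1 hIk I hI1, if_neg (lt_irrefl I), hc2]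
        rw [harg, cycA_aext hda hdaL hI1 (by omega), show t-1 = I by omega,
          Equiv.swap_apply_left]
        rcases Nat.lt_or_ge 1 I with hc3 | hc3
        · rw [aext_dela hI1 hIk (I-1) (by omega), if_pos (by omega)]
        · rw [show I - 1 = 0 by omega, aext_zero, aext_zero]
      · have hne1 : aext a (t-1) ≠ aext a I := by
          rcases Nat.eq_or_lt_of_le h1t with hc3 | hc3
          · rw [← hc3, show (1:ℕ)-1 = 0 by omega, aext_zero]
            exact hIlast.ne'
          · exact aext_ne (s := t-1) (t := I) ha haL (by omega) (by omega) hI1 (by omega)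
              (by omega)
        have hne2 : aext a (t-1) ≠ aext a (I-1) := by
          rcases Nat.lt_or_ge 1 I with hc3 | hc3
          · rcases Nat.eq_or_lt_of_le h1t with hc4 | hc4
            · rw [← hc4, show (1:ℕ)-1 = 0 by omega, aext_zero]
              exact (haextL (I-1) (by omega) (by omega)).ne'
            · exact aext_ne (s := t-1) (t := I-1) ha haL (by omega) (by omega) (by omega)
                (by omega) (by omega)
          · rw [show I - 1 = 0 by omega, aext_zero]
            exact (haextL (t-1) (by omega) (by omega)).ne
        rw [Equiv.swap_apply_of_ne_of_ne hne1 hne2]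
        rcases Nat.lt_or_ge t I with hc3 | hc3
        · have harg : aext a t = aext (dela a I) t := by
            rw [aext_dela hI1 hIk t h1t, if_pos hc3]
          rw [harg, cycA_aext hda hdaL h1t (by omega)]
          rcases Nat.eq_or_lt_of_le h1t with hc4 | hc4
          · rw [← hc4, show (1:ℕ)-1 = 0 by omega, aext_zero, aext_zero]
          · rw [aext_dela hI1 hIk (t-1) (by omega), if_pos (by omega)]
        · have hc4 : I + 2 ≤ t := by omega
          have harg : aext a t = aext (dela a I) (t-1) := by
            rw [aext_dela hI1 hIk (t-1) (by omega), if_neg (by omega),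
              show t-1+1 = t by omega]
          rw [harg, cycA_aext hda hdaL (by omega) (by omega),
            aext_dela hI1 hIk (t-1-1) (by omega), if_neg (by omega),
            show t-1-1+1 = t-1 by omega]
  · push_neg at hx
    have hne1 : x ≠ aext a I := hx I hI1 (by omega)
    have hne2 : x ≠ aext a (I-1) := by
      rcases Nat.lt_or_ge 1 I with hc3 | hc3
      · exact hx (I-1) (by omega) (by omega)
      · rw [show I - 1 = 0 by omega, aext_zero, ← aext_of_ge (a := a) (show k < k+1 by omega)]
        exact hx (k+1) (by omega) (by omega)
    have hfixd : cycA (dela a I) x = x := by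
      apply cycA_fix
      intro t h1 h2
      rw [aext_dela hI1 hIk t h1]
      by_cases hc : t < I
      · rw [if_pos hc]; exact hx t h1 (by omega)
      · rw [if_neg hc]; exact hx (t+1) (by omega) (by omega)
    rw [hfixd, cycA_fix hx, Equiv.swap_apply_of_ne_of_ne hne1 hne2]

end Surgery2


/-- case 2 of the definition of `φ`.  Suppose `(A,B) ∈ D` with `m ≥ 1`
satisfies (∗), `j_1 ≥ 1`, `u⁻¹(b_{j_1−1}) < u⁻¹(b_{j_1})`, and either `j_m = h` or
`a_{i_m+1} < b_{j_m+1}`.  With `B̄ := (b_{j_m+1}, a_{i_m+1})·B` and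
`Ā := (a_{i_1}, a_{i_1−1})·A`, one has `(B̄,Ā) ∈ D̄`, `B·A = Ā·B̄` and `k + h = k̄ + h̄`. -/
theorem statement4 (n : ℕ) (u v : Equiv.Perm (Fin (n+2))) (k h : ℕ)
    (a : Fin k → Fin (n+2)) (b : Fin h → Fin (n+2))
    (hA : DCondA u v a) (hB : DCondB u v (cycA a) b)
    (m : ℕ) (hm : 0 < m) (i j : Fin m → ℕ)
    (hinter : InterD a b i j) (hstar : StarHyp i j)
    (hj1 : 1 ≤ j ⟨0, hm⟩)
    (hpos : u.symm (bext b (j ⟨0, hm⟩ - 1)) < u.symm (bext b (j ⟨0, hm⟩)))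
    (hcmp : j ⟨m - 1, by omega⟩ = h ∨
      aext a (i ⟨m - 1, by omega⟩ + 1) < bext b (j ⟨m - 1, by omega⟩ + 1)) :
    ∀ Bb Ab : Equiv.Perm (Fin (n+2)),
      Bb = Equiv.swap (bext b (j ⟨m - 1, by omega⟩ + 1)) (aext a (i ⟨m - 1, by omega⟩ + 1)) *
            cycB 0 b →
      Ab = Equiv.swap (aext a (i ⟨0, hm⟩)) (aext a (i ⟨0, hm⟩ - 1)) * cycA a →
      memDbar u v Bb Ab ∧ cycB 0 b * cycA a = Ab * Bb ∧ k + h = clen Ab + clen Bb := by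
  intro Bb Ab hBbDef hAbDef
  obtain ⟨ha, haL, hva, hmA⟩ := hA
  obtain ⟨hb, hbp, hmB, hlB⟩ := hB
  have hb0 : ∀ i, 0 < b i := fun i => (hbp i).1
  have hbL : ∀ i, b i < Fin.last (n+1) := fun i => (hbp i).2
  obtain ⟨hmi, hmj, hik, hjh, hab, hsupp⟩ := hinter
  -- index arithmetic from the star hypothesis
  have hIdx : ∀ r : ℕ, (hr : r < m) →
      i ⟨r, hr⟩ = i ⟨0, hm⟩ + r ∧ j ⟨r, hr⟩ = j ⟨0, hm⟩ + r := by
    intro r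
    induction r with
    | zero => intro hr; constructor <;> rfl
    | succ r ih =>
      intro hr
      have hr' : r < m := by omega
      obtain ⟨h1, h2⟩ := hstar ⟨r, hr'⟩ hr
      rw [h1, h2, (ih hr').1, (ih hr').2]
      constructor <;> omega
  have hm1 : m - 1 < m := by omega
  have hIm : i ⟨m-1, hm1⟩ = i ⟨0, hm⟩ + (m-1) := (hIdx (m-1) hm1).1
  have hJm : j ⟨m-1, hm1⟩ = j ⟨0, hm⟩ + (m-1) := (hIdx (m-1) hm1).2
  set I : ℕ := i ⟨0, hm⟩ with hIdef
  set J : ℕ := j ⟨0, hm⟩ with hJdef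
  have hI1 : 1 ≤ I := (hik ⟨0, hm⟩).1
  have hIMk : I + (m-1) ≤ k := by have := (hik ⟨m-1, hm1⟩).2; rwa [hIm] at this
  have hIk : I ≤ k := by omega
  have hJ1 : 1 ≤ J := hj1
  have hJMh : J + (m-1) ≤ h := by have := hjh ⟨m-1, hm1⟩; rwa [hJm] at this
  have hk1 : 1 ≤ k := by omega
  have hh1 : 1 ≤ h := by omega
  -- the intersection values
  have hc : ∀ r, r ≤ (m-1) → aext a (I + r) = bext b (J + r) := by
    intro r hr
    have hrm : r < m := by omega
    have := hab ⟨r, hrm⟩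
    rwa [(hIdx r hrm).1, (hIdx r hrm).2] at this
  -- membership facts
  have hlastB : ∀ s, bext b s ≠ Fin.last (n+1) := fun s => (bext_lt_last hbL s).ne
  have hnotB : ∀ t, 1 ≤ t → t ≤ k+1 → (t < I ∨ I + (m-1) < t) →
      ∀ s, s ≤ h → aext a t ≠ bext b s := by
    intro t h1t htk htI s hsh heq
    rcases Nat.lt_or_ge k t with hc1 | hc1
    · exact hlastB s (by rw [← heq, aext_of_ge hc1])
    · have hmemA : aext a t ∈ (cycA a).support :=
        (mem_support_cycA ha haL hk1).mpr ⟨t, h1t, by omega, rfl⟩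
      have hmemB : aext a t ∈ (cycB 0 b).support :=
        (mem_support_cycB hb hb0 hh1).mpr ⟨s, hsh, heq⟩
      have : aext a t ∈ Finset.image (fun l => aext a (i l)) Finset.univ := by
        rw [← hsupp]; exact Finset.mem_inter.mpr ⟨hmemA, hmemB⟩
      rw [Finset.mem_image] at this
      obtain ⟨l, -, hl⟩ := this
      have hil : i l = I + l.1 := by
        have := (hIdx l.1 l.2).1
        rwa [show (⟨l.1, l.2⟩ : Fin m) = l from rfl] at this
      have : I + l.1 = t := by
        apply aext_inj ha haL (by omega) (by omega) h1t (by omega)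
        rw [← hil, hl]
      omega
  have hnotA : ∀ s, s ≤ h → (s < J ∨ J + (m-1) < s) →
      ∀ t, 1 ≤ t → t ≤ k+1 → bext b s ≠ aext a t := by
    intro s hsh hsJ t h1t htk heq
    rcases Nat.lt_or_ge k t with hc1 | hc1
    · exact hlastB s (by rw [heq, aext_of_ge hc1])
    · have hmemA : bext b s ∈ (cycA a).support :=
        (mem_support_cycA ha haL hk1).mpr ⟨t, h1t, by omega, heq⟩
      have hmemB : bext b s ∈ (cycB 0 b).support :=
        (mem_support_cycB hb hb0 hh1).mpr ⟨s, hsh, rfl⟩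
      have : bext b s ∈ Finset.image (fun l => aext a (i l)) Finset.univ := by
        rw [← hsupp]; exact Finset.mem_inter.mpr ⟨hmemA, hmemB⟩
      rw [Finset.mem_image] at this
      obtain ⟨l, -, hl⟩ := this
      have hil : i l = I + l.1 := by
        have := (hIdx l.1 l.2).1
        rwa [show (⟨l.1, l.2⟩ : Fin m) = l from rfl] at this
      have hjl : j l = J + l.1 := by
        have := (hIdx l.1 l.2).2
        rwa [show (⟨l.1, l.2⟩ : Fin m) = l from rfl] at this
      have hl2 : bext b (J + l.1) = bext b s := by
        rw [← hc l.1 (by omega), ← hil, hl]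
      have : J + l.1 = s := bext_inj hb hb0 (by omega) hsh hl2
      omega
  -- abbreviations
  set z : Fin (n+2) := aext a (I + (m-1) + 1) with hzdef
  set w : Fin (n+2) := bext b (J + (m-1) + 1) with hwdef
  have hz1 : bext b (J + (m-1)) < z := by
    rw [← hc (m-1) (le_refl (m-1))]
    exact aext_lt_aext ha haL (by omega) (by omega) (by omega)
  have hz2 : ∀ s, J + (m-1) + 1 ≤ s → s ≤ h → z < bext b s := by
    intro s hs1 hs2
    rcases hcmp with hcase | hcase
    · rw [hJm] at hcase; omega
    · rw [hIm, hJm] at hcase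
      rcases Nat.eq_or_lt_of_le hs1 with hc1 | hc1
      · rw [← hc1]; exact hcase
      · exact lt_trans hcase (bext_lt_bext hb hb0 (by omega) hs2)
  set bbar := insb b (J + (m-1)) z with hbbardef
  set abar := dela a I with habardef
  have hbb : StrictMono bbar := insb_strictMono hb hb0 (by omega) (by omega) hz1 hz2
  have hbb0 : ∀ i, 0 < bbar i := insb_pos hb0 (by omega) (by omega) hz1
  have hda : StrictMono abar := dela_strictMono ha haL hI1 hIk
  have hdaL : ∀ i, abar i < Fin.last (n+1) := dela_lt_last ha haL hI1 hIk
  have hBb : Bb = cycB 0 bbar := by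
    rw [hBbDef, hIm, hJm, hbbardef,
      cycB_insert_eq hb hb0 (by omega) (by omega) hz1 hz2]
  have hAb : Ab = cycA abar := by
    rw [hAbDef, habardef, cycA_delete_eq ha haL hI1 hIk]
  -- evaluation formulas
  have hbbext : ∀ t, bext bbar t = if t ≤ J + (m-1) then bext b t
      else if t = J + (m-1) + 1 then z else bext b (t-1) :=
    fun t => bext_insb hJMh t
  have haaext1 : ∀ t, 1 ≤ t → t < I → aext abar t = aext a t := by
    intro t h1 h2
    rw [habardef, aext_dela hI1 hIk t h1, if_pos h2]
  have haaext2 : ∀ t, I ≤ t → aext abar t = aext a (t+1) := by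
    intro t h2
    rw [habardef, aext_dela hI1 hIk t (by omega), if_neg (by omega)]
  have hUA : ∀ s t, 1 ≤ s → s < t → t ≤ k+1 →
      u.symm (aext a s) < u.symm (aext a t) := by
    intro s t h1 h2 h3
    have := hmA (show (⟨s-1, by omega⟩ : Fin (k+1)) < ⟨t-1, by omega⟩ by
      rw [Fin.mk_lt_mk]; omega)
    simp only [asnoc_eq_aext] at this
    rwa [show s-1+1 = s by omega, show t-1+1 = t by omega] at this
  have hW : ∀ s t, s < t → t ≤ h →
      u.symm ((cycA a).symm (bext b s)) < u.symm ((cycA a).symm (bext b t)) := by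
    intro s t h2 h3
    have := hmB (show (⟨s, by omega⟩ : Fin (h+1)) < ⟨t, by omega⟩ by
      rw [Fin.mk_lt_mk]; omega)
    simpa only [bcons_zero_eq_bext] using this
  -- z is not among the b values, and not 0
  have hzneB : ∀ s, s ≤ h → z ≠ bext b s :=
    fun s hs => hnotB (I+(m-1)+1) (by omega) (by omega) (Or.inr (by omega)) s hs
  -- w is not an a-value
  have hwfix : ∀ t', 1 ≤ t' → t' ≤ k+1 → bext b (J+(m-1)+1) ≠ aext a t' := by
    intro t' h1 h2
    rcases Nat.lt_or_ge h (J+(m-1)+1) with hc1 | hc1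
    · rw [bext_of_ge hc1, ← bext_zero (b := b)]
      exact hnotA 0 (by omega) (Or.inl (by omega)) t' h1 h2
    · exact hnotA (J+(m-1)+1) hc1 (Or.inr (by omega)) t' h1 h2
  have h0 : aext a I = bext b J := by simpa using hc 0 (by omega)
  -- fixed points of cycA abar among b-values
  have hfixAbar : ∀ s, s ≤ h+1 → (s < J ∨ J + (m-1) < s) →
      cycA abar (bext b s) = bext b s := by
    intro s hs hsJ
    apply cycA_fix
    intro t' h1 h2
    have hne : ∀ tt, 1 ≤ tt → tt ≤ k+1 → bext b s ≠ aext a tt := by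
      intro tt htt1 htt2
      rcases Nat.lt_or_ge h s with hc1 | hc1
      · rw [bext_of_ge hc1, ← bext_zero (b := b)]
        exact hnotA 0 (by omega) (Or.inl (by omega)) tt htt1 htt2
      · exact hnotA s hc1 hsJ tt htt1 htt2
    rcases Nat.lt_or_ge t' I with hci | hci
    · rw [haaext1 t' h1 hci]; exact hne t' h1 (by omega)
    · rw [haaext2 t' hci]; exact hne (t'+1) (by omega) (by omega)
  -- the product identity
  have hprod : cycB 0 b * cycA a = cycA abar * cycB 0 bbar := by
    apply Equiv.ext
    intro x
    rw [Equiv.Perm.mul_apply, Equiv.Perm.mul_apply]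
    by_cases hxA : ∃ t, 1 ≤ t ∧ t ≤ k+1 ∧ x = aext a t
    · obtain ⟨t, h1t, htk, rfl⟩ := hxA
      rw [cycA_aext ha haL h1t htk]
      by_cases hcA : t = I
      · -- t = I
        have hL : cycB 0 b (aext a (t-1)) = aext a (t-1) := by
          apply cycB_fix
          intro s hs
          rcases Nat.lt_or_ge 1 t with hc2 | hc2
          · exact hnotB (t-1) (by omega) (by omega) (Or.inl (by omega)) s hs
          · rw [show t-1 = 0 by omega, aext_zero]
            exact (bext_lt_last hbL s).ne'
        have hR1 : aext a t = bext bbar J := by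
          rw [hcA, hbbext J, if_pos (by omega)]
          exact h0
        have hR2 : bext bbar (J+1) = aext a (t+1) := by
          rw [hbbext (J+1)]
          rcases Nat.lt_or_ge J (J+(m-1)) with hc2 | hc2
          · rw [if_pos (by omega), ← hc 1 (by omega), hcA]
          · rw [if_neg (by omega), if_pos (by omega), hzdef, hcA]
            congr 1
            omega
        have hR3 : aext a (t+1) = aext abar t := (haaext2 t (by omega)).symm
        have hR : cycA abar (cycB 0 bbar (aext a t)) = aext a (t-1) := by
          rw [hR1, cycB_bext hbb hbb0 (by omega), hR2, hR3,
            cycA_aext hda hdaL h1t (by omega)]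
          rcases Nat.lt_or_ge 1 t with hc2 | hc2
          · rw [haaext1 (t-1) (by omega) (by omega)]
          · rw [show t-1 = 0 by omega, aext_zero, aext_zero]
        rw [hL, hR]
      · by_cases hcB : I+1 ≤ t ∧ t ≤ I+(m-1)
        · -- middle intersection range: both sides equal aext a t
          have hL : cycB 0 b (aext a (t-1)) = bext b (J+(t-I)) := by
            rw [show t-1 = I + (t-1-I) by omega, hc (t-1-I) (by omega),
              cycB_bext hb hb0 (by omega), show J+(t-1-I)+1 = J + (t-I) by omega]
          have hR1 : aext a t = bext bbar (J+(t-I)) := by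
            rw [hbbext, if_pos (by omega), ← hc (t-I) (by omega)]
            congr 1
            omega
          have hR : cycA abar (cycB 0 bbar (aext a t)) = bext b (J+(t-I)) := by
            rw [hR1, cycB_bext hbb hbb0 (by omega)]
            rcases Nat.lt_or_ge t (I+(m-1)) with hc2 | hc2
            · rw [hbbext, if_pos (by omega), show J+(t-I)+1 = J+(t-I+1) by omega,
                ← hc (t-I+1) (by omega),
                show I+(t-I+1) = t+1 by omega, ← haaext2 t (by omega),
                cycA_aext hda hdaL (by omega) (by omega), haaext2 (t-1) (by omega),
                show t-1+1 = t by omega, ← hc (t-I) (by omega), show I+(t-I) = t by omega]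
            · have ht2 : t = I + (m-1) := by omega
              rw [hbbext, if_neg (by omega), if_pos (by omega),
                show z = aext abar t by rw [haaext2 t (by omega), hzdef, ht2],
                cycA_aext hda hdaL (by omega) (by omega), haaext2 (t-1) (by omega),
                show t-1+1 = t by omega, ← hc (t-I) (by omega), show I+(t-I) = t by omega]
          rw [hL, hR]
        · by_cases hcC : t = I+(m-1)+1
          · -- t = Im + 1
            have hL : cycB 0 b (aext a (t-1)) = bext b (J+(m-1)+1) := by
              rw [show t-1 = I+(m-1) by omega, hc (m-1) (by omega),
                cycB_bext hb hb0 (by omega)]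
            have hR1 : aext a t = bext bbar (J+(m-1)+1) := by
              rw [hbbext, if_neg (by omega), if_pos rfl, hzdef, hcC]
            rw [hL, hR1, cycB_bext hbb hbb0 (by omega), hbbext,
              if_neg (by omega), if_neg (by omega), show J+(m-1)+1+1-1 = J+(m-1)+1 by omega,
              hfixAbar (J+(m-1)+1) (by omega) (Or.inr (by omega))]
          · -- outside range
            have ht4 : t < I ∨ I+(m-1)+1 < t := by omega
            have hL : cycB 0 b (aext a (t-1)) = aext a (t-1) := by
              apply cycB_fix
              intro s hs
              rcases Nat.lt_or_ge 1 t with hc2 | hc2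
              · exact hnotB (t-1) (by omega) (by omega) (by omega) s hs
              · rw [show t-1 = 0 by omega, aext_zero]
                exact (bext_lt_last hbL s).ne'
            have hR1 : cycB 0 bbar (aext a t) = aext a t := by
              apply cycB_fix
              intro s' hs'
              rw [hbbext s']
              by_cases hc2 : s' ≤ J+(m-1)
              · rw [if_pos hc2]
                exact hnotB t h1t htk (by omega) s' (by omega)
              · rw [if_neg hc2]
                by_cases hc3 : s' = J+(m-1)+1
                · rw [if_pos hc3, hzdef]
                  exact aext_ne (s := t) (t := I+(m-1)+1) ha haL h1t htk (by omega)
                    (by omega) (by omega)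
                · rw [if_neg hc3]
                  exact hnotB t h1t htk (by omega) (s'-1) (by omega)
            rw [hL, hR1]
            rcases ht4 with ht4 | ht4
            · rw [show aext a t = aext abar t from (haaext1 t h1t ht4).symm,
                cycA_aext hda hdaL h1t (by omega)]
              rcases Nat.lt_or_ge 1 t with hc2 | hc2
              · rw [haaext1 (t-1) (by omega) (by omega)]
              · rw [show t-1 = 0 by omega, aext_zero, aext_zero]
            · rw [show aext a t = aext abar (t-1) by
                  rw [haaext2 (t-1) (by omega), show t-1+1 = t by omega],
                cycA_aext hda hdaL (by omega) (by omega), haaext2 (t-1-1) (by omega),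
                show t-1-1+1 = t-1 by omega]
    · by_cases hxB : ∃ s, s ≤ h ∧ x = bext b s
      · obtain ⟨s, hsh, rfl⟩ := hxB
        have hsJ : s < J ∨ J + (m-1) < s := by
          by_contra hcon
          push_neg at hcon
          exact hxA ⟨I+(s-J), by omega, by omega, by
            rw [hc (s-J) (by omega)]
            congr 1
            omega⟩
        have hL : cycA a (bext b s) = bext b s := by
          apply cycA_fix
          intro t h1 h2
          exact hnotA s hsh hsJ t h1 h2
        rw [hL, cycB_bext hb hb0 hsh]
        rcases hsJ with hsJ | hsJ
        · -- s < J
          have hR1 : bext b s = bext bbar s := by rw [hbbext, if_pos (by omega)]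
          rw [hR1, cycB_bext hbb hbb0 (by omega), hbbext, if_pos (by omega)]
          rcases Nat.lt_or_ge (s+1) J with hc2 | hc2
          · exact (hfixAbar (s+1) (by omega) (Or.inl hc2)).symm
          · -- s+1 = J : bext b J = aext a I, not an abar value
            have hsJ2 : s+1 = J := by omega
            symm
            apply cycA_fix
            intro t' h1 h2
            rw [hsJ2, ← h0]
            rcases Nat.lt_or_ge t' I with hci | hci
            · rw [haaext1 t' h1 hci]
              exact aext_ne (s := I) (t := t') ha haL hI1 (by omega) h1 (by omega) (by omega)
            · rw [haaext2 t' hci]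
              exact aext_ne (s := I) (t := t'+1) ha haL hI1 (by omega) (by omega) (by omega)
                (by omega)
        · -- s > J + (m-1)
          have hR1 : bext b s = bext bbar (s+1) := by
            rw [hbbext, if_neg (by omega), if_neg (by omega), show s+1-1 = s by omega]
          rw [hR1, cycB_bext hbb hbb0 (by omega), hbbext, if_neg (by omega),
            if_neg (by omega), show s+1+1-1 = s+1 by omega]
          exact (hfixAbar (s+1) (by omega) (Or.inr (by omega))).symm
      · push_neg at hxA
        push_neg at hxB
        have hL1 : cycA a x = x := cycA_fix hxA
        have hL2 : cycB 0 b x = x := cycB_fix hxB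
        have hR1 : cycB 0 bbar x = x := by
          apply cycB_fix
          intro s' hs'
          rw [hbbext s']
          by_cases hc2 : s' ≤ J+(m-1)
          · rw [if_pos hc2]; exact hxB s' (by omega)
          · rw [if_neg hc2]
            by_cases hc3 : s' = J+(m-1)+1
            · rw [if_pos hc3, hzdef]; exact hxA (I+(m-1)+1) (by omega) (by omega)
            · rw [if_neg hc3]; exact hxB (s'-1) (by omega)
        have hR2 : cycA abar x = x := by
          apply cycA_fix
          intro t' h1 h2
          rcases Nat.lt_or_ge t' I with hci | hci
          · rw [haaext1 t' h1 hci]; exact hxA t' h1 (by omega)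
          · rw [haaext2 t' hci]; exact hxA (t'+1) (by omega) (by omega)
        rw [hL1, hL2, hR1, hR2]
  -- symm evaluation on the A side
  have hAsymm : ∀ s, s ≤ h → (cycA a).symm (bext b s) =
      (if J ≤ s ∧ s ≤ J+(m-1) then aext a (I+(s-J)+1) else bext b s) := by
    intro s hs
    by_cases hcs : J ≤ s ∧ s ≤ J+(m-1)
    · rw [if_pos hcs, show bext b s = aext a (I+(s-J)) from by
          rw [hc (s-J) (by omega)]; congr 1; omega,
        cycA_symm_aext ha haL (by omega)]
    · rw [if_neg hcs]
      apply symm_fix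
      apply cycA_fix
      intro t h1 h2
      exact hnotA s hs (by omega) t h1 h2
  -- symm evaluation on the Bbar side
  have hBsymm : ∀ t', 1 ≤ t' → t' ≤ k →
      (cycB 0 bbar).symm (aext abar t') =
        (if t' ≤ I+(m-1) then aext a t' else aext a (t'+1)) := by
    intro t' h1 h2
    rcases Nat.lt_or_ge t' I with hci | hci
    · rw [if_pos (by omega), haaext1 t' h1 hci]
      apply symm_fix
      apply cycB_fix
      intro s' hs'
      rw [hbbext s']
      by_cases hc2 : s' ≤ J+(m-1)
      · rw [if_pos hc2]; exact hnotB t' h1 (by omega) (Or.inl hci) s' (by omega)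
      · rw [if_neg hc2]
        by_cases hc3 : s' = J+(m-1)+1
        · rw [if_pos hc3, hzdef]
          exact aext_ne (s := t') (t := I+(m-1)+1) ha haL h1 (by omega) (by omega)
            (by omega) (by omega)
        · rw [if_neg hc3]; exact hnotB t' h1 (by omega) (Or.inl hci) (s'-1) (by omega)
    · rcases Nat.lt_or_ge (I+(m-1)) t' with hcj | hcj
      · rw [if_neg (by omega), haaext2 t' hci]
        apply symm_fix
        apply cycB_fix
        intro s' hs'
        rw [hbbext s']
        by_cases hc2 : s' ≤ J+(m-1)
        · rw [if_pos hc2]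
          exact hnotB (t'+1) (by omega) (by omega) (Or.inr (by omega)) s' (by omega)
        · rw [if_neg hc2]
          by_cases hc3 : s' = J+(m-1)+1
          · rw [if_pos hc3, hzdef]
            exact aext_ne (s := t'+1) (t := I+(m-1)+1) ha haL (by omega) (by omega)
              (by omega) (by omega) (by omega)
          · rw [if_neg hc3]
            exact hnotB (t'+1) (by omega) (by omega) (Or.inr (by omega)) (s'-1) (by omega)
      · rw [if_pos (by omega), haaext2 t' hci]
        have he : aext a (t'+1) = bext bbar (J+(t'+1)-I) := by
          rw [hbbext]
          by_cases hc2 : J+(t'+1)-I ≤ J+(m-1)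
          · rw [if_pos hc2, show J+(t'+1)-I = J+(t'+1-I) by omega,
              ← hc (t'+1-I) (by omega)]
            congr 1
            omega
          · rw [if_neg hc2, if_pos (by omega), hzdef]
            congr 1
            omega
        rw [he, cycB_symm_bext hbb hbb0 (by omega) (by omega),
          show J+(t'+1)-I-1 = J+(t'-I) by omega, hbbext, if_pos (by omega),
          ← hc (t'-I) (by omega)]
        congr 1
        omega
  refine ⟨⟨h+1, k-1, bbar, abar, hBb, hAb, ⟨hbb, hbb0, ?_, ?_⟩,
    ⟨hda, hdaL, ?_, ?_⟩⟩, by rw [hAb, hBb]; exact hprod, ?_⟩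
  · -- StrictMono of u.symm ∘ bcons 0 bbar
    apply strictMono_fin_succ
    intro s hs
    simp only [bcons_zero_eq_bext]
    show u.symm (bext bbar s) < u.symm (bext bbar (s+1))
    rcases Nat.lt_or_ge (s+1) J with hc1 | hc1
    · have e1 : bext b s = (cycA a).symm (bext b s) := by
        rw [hAsymm s (by omega), if_neg (by omega)]
      have e2 : bext b (s+1) = (cycA a).symm (bext b (s+1)) := by
        rw [hAsymm (s+1) (by omega), if_neg (by omega)]
      rw [hbbext s, if_pos (by omega), hbbext (s+1), if_pos (by omega), e1, e2]
      exact hW s (s+1) (by omega) (by omega)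
    · rcases Nat.eq_or_lt_of_le hc1 with hc2 | hc2
      · rw [hbbext s, if_pos (by omega), hbbext (s+1), if_pos (by omega),
          show s = J - 1 by omega, show J-1+1 = J by omega]
        exact hpos
      · rcases Nat.lt_or_ge s (J+(m-1)) with hc3 | hc3
        · rw [hbbext s, if_pos (by omega), hbbext (s+1), if_pos (by omega),
            show s = J + (s-J) by omega, ← hc (s-J) (by omega),
            show J+(s-J)+1 = J+(s-J+1) by omega, ← hc (s-J+1) (by omega)]
          exact hUA (I+(s-J)) (I+(s-J+1)) (by omega) (by omega) (by omega)
        · rcases Nat.eq_or_lt_of_le hc3 with hc4 | hc4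
          · rw [hbbext s, if_pos (by omega), hbbext (s+1), if_neg (by omega),
              if_pos (by omega), hzdef, ← hc4, ← hc (m-1) (le_refl _)]
            exact hUA (I+(m-1)) (I+(m-1)+1) (by omega) (by omega) (by omega)
          · rcases Nat.eq_or_lt_of_le hc4 with hc5 | hc5
            · -- s = Jm + 1
              have hWW := hW (J+(m-1)) s (by omega) (by omega)
              rw [hAsymm (J+(m-1)) (by omega), if_pos (by omega),
                hAsymm s (by omega), if_neg (by omega),
                show J+(m-1)-J = m-1 by omega] at hWW
              rw [hbbext s, if_neg (by omega), if_pos (by omega), hzdef,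
                hbbext (s+1), if_neg (by omega), if_neg (by omega),
                show s+1-1 = s by omega]
              exact hWW
            · -- s ≥ Jm + 2
              have hWW := hW (s-1) s (by omega) (by omega)
              rw [hAsymm (s-1) (by omega), if_neg (by omega),
                hAsymm s (by omega), if_neg (by omega)] at hWW
              rw [hbbext s, if_neg (by omega), if_neg (by omega),
                hbbext (s+1), if_neg (by omega), if_neg (by omega),
                show s+1-1 = s by omega]
              exact hWW
  · -- last entry of the Bbar condition
    have hlB' : u.symm ((cycA a).symm (bext b h)) = v.symm 0 := by
      have := hlB
      rw [bcons_zero_eq_bext] at this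
      simpa only [Fin.val_last] using this
    rw [bcons_zero_eq_bext]
    simp only [Fin.val_last]
    rw [hbbext (h+1)]
    by_cases hch : J + (m-1) = h
    · rw [if_neg (by omega), if_pos (by omega), hzdef]
      rw [hAsymm h (by omega), if_pos (by omega),
        show I+(h-J)+1 = I+(m-1)+1 by omega] at hlB'
      exact hlB'
    · rw [if_neg (by omega), if_neg (by omega), show h+1-1 = h by omega]
      rw [hAsymm h (by omega), if_neg (by omega)] at hlB'
      exact hlB'
  · -- first entry of the Abar condition
    rw [hBb, show asnoc abar 0 = aext abar 1 from by
        rw [asnoc_eq_aext]; simp,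
      hBsymm 1 (le_refl 1) hk1, if_pos (by omega)]
    rw [asnoc_eq_aext] at hva
    simpa using hva
  · -- StrictMono of the Abar condition
    rw [hBb]
    apply strictMono_fin_succ
    intro s hs
    rw [asnoc_eq_aext, asnoc_eq_aext]
    simp only []
    show u.symm ((cycB 0 bbar).symm (aext abar (s+1))) <
      u.symm ((cycB 0 bbar).symm (aext abar (s+1+1)))
    rw [hBsymm (s+1) (by omega) (by omega), hBsymm (s+2) (by omega) (by omega)]
    by_cases hd1 : s+1 ≤ I+(m-1)
    · rw [if_pos hd1]
      by_cases hd2 : s+2 ≤ I+(m-1)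
      · rw [if_pos hd2]
        exact hUA (s+1) (s+2) (by omega) (by omega) (by omega)
      · rw [if_neg hd2]
        exact hUA (s+1) (s+3) (by omega) (by omega) (by omega)
    · rw [if_neg hd1, if_neg (by omega)]
      exact hUA (s+2) (s+3) (by omega) (by omega) (by omega)
  · -- cardinalities
    rw [hAb, hBb]
    show k + h = (cycA abar).support.card - 1 + ((cycB 0 bbar).support.card - 1)
    rw [habardef, hbbardef] at *
    rw [card_support_cycA_if hda hdaL, card_support_cycB hbb hbb0 (by omega)]
    split_ifs with hc1 <;> omega


end DblShortcut
end

section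
/- Let w_0 ∈ S_n be the permutation i ↦ n+1−i, and for permutations u', v' ∈ S_n write D(u',v') and D̄(u',v') for the sets D and D̄ defined with respect to u' and v'. Then the map (B̄,Ā) ↦ (w_0·B̄·w_0, w_0·Ā·w_0) is a bijection from D̄(u,v) onto D(w_0·u·w_0, w_0·v·w_0); here the first component w_0·B̄·w_0 plays the role of the cycle of the form (n,a_k,…,a_1) and the second component w_0·Ā·w_0 the role of the cycle of the form (1,b_1,…,b_h). -/
/-!
Common setup: the symmetric group `S_n` (`n ≥ 2`) is modeled as `Equiv.Perm (Fin (n+2))`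
(so every `n ≥ 2` is of the form `n+2` with `n : ℕ`).  The element `1` of `{1,…,n}` is
`0 : Fin (n+2)` and the element `n` is `Fin.last (n+1)`.
Composition of permutations is multiplication: `(C * C') x = C (C' x)`.
-/

open Equiv

namespace DblShortcut

/-- The longest element `w_0 : i ↦ n+1−i` of the symmetric group, i.e. the order-reversing
permutation of `Fin (n+2)`.  Note `w_0 = w_0⁻¹`. -/
def w0 (n : ℕ) : Equiv.Perm (Fin (n+2)) :=
  ⟨Fin.rev, Fin.rev, Fin.rev_rev, Fin.rev_rev⟩

variable {n : ℕ}

@[simp] lemma w0_apply (x : Fin (n+2)) : w0 n x = x.rev := rfl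

@[simp] lemma coe_w0 : ⇑(w0 n) = Fin.rev := rfl

lemma w0_inv : (w0 n)⁻¹ = w0 n := Equiv.ext fun _ => rfl

@[simp] lemma w0_sq : w0 n * w0 n = 1 := Equiv.ext fun x => Fin.rev_rev x

/-- Conjugation of a `formPerm` by a permutation. -/
lemma formPerm_conj {α : Type*} [DecidableEq α] (f : Equiv.Perm α) (l : List α) :
    f * l.formPerm * f⁻¹ = (l.map f).formPerm := by
  unfold List.formPerm
  rw [← List.map_tail, List.zipWith_map]
  have h1 : (List.zipWith (fun a b => Equiv.swap (f a) (f b)) l l.tail)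
      = (List.zipWith Equiv.swap l l.tail).map (MulAut.conj f) := by
    rw [List.map_zipWith]
    simp [Equiv.swap_apply_apply, MulAut.conj_apply]
  have h2 := List.prod_hom (List.zipWith Equiv.swap l l.tail) (MulAut.conj f).toMonoidHom
  rw [h1]
  simp only [MulEquiv.coe_toMonoidHom] at h2
  rw [h2, MulAut.conj_apply]

/-- The sequence `i ↦ rev (f (rev i))`. -/
def revSeq {m : ℕ} (f : Fin m → Fin (n+2)) : Fin m → Fin (n+2) := fun i => (f i.rev).rev

lemma ofFn_revSeq {m : ℕ} (f : Fin m → Fin (n+2)) :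
    List.ofFn (revSeq f) = ((List.ofFn f).map Fin.rev).reverse := by
  apply List.ext_getElem
  · simp
  · intro i h1 h2
    simp only [List.getElem_ofFn, List.getElem_reverse, List.getElem_map]
    simp only [List.length_reverse, List.length_map, List.length_ofFn] at h1 h2 ⊢
    simp only [List.getElem_ofFn, revSeq]
    congr 2
    ext
    simp only [Fin.rev]
    omega

lemma w0_mul_cycB {h : ℕ} (b : Fin h → Fin (n+2)) :
    w0 n * cycB 0 b * w0 n = cycA (revSeq b) := by
  rw [show (w0 n * cycB 0 b * w0 n : Perm (Fin (n+2))) = w0 n * cycB 0 b * (w0 n)⁻¹ by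
    rw [w0_inv]]
  unfold cycB cycA
  rw [formPerm_conj]
  congr 1
  rw [ofFn_revSeq, List.reverse_reverse, coe_w0]
  simp

lemma w0_mul_cycA {k : ℕ} (a : Fin k → Fin (n+2)) :
    w0 n * cycA a * w0 n = cycB 0 (revSeq a) := by
  rw [show (w0 n * cycA a * w0 n : Perm (Fin (n+2))) = w0 n * cycA a * (w0 n)⁻¹ by
    rw [w0_inv]]
  unfold cycB cycA
  rw [formPerm_conj]
  congr 1
  rw [ofFn_revSeq, ← List.map_reverse, coe_w0]
  simp

lemma revComp_strictMono {m : ℕ} {f : Fin m → Fin (n+2)} (hf : StrictMono f) :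
    StrictMono fun i : Fin m => (f i.rev).rev := by
  intro i j hij
  exact Fin.rev_lt_rev.mpr (hf (Fin.rev_lt_rev.mpr hij))

lemma rev_asnoc {h : ℕ} (b : Fin h → Fin (n+2)) (i : Fin (h+1)) :
    Fin.rev (asnoc (revSeq b) i) = bcons 0 b i.rev := by
  induction i using Fin.lastCases with
  | last => simp [asnoc, bcons, Fin.snoc_last, Fin.rev_last]
  | cast j =>
    simp only [asnoc, bcons, Fin.snoc_castSucc, revSeq, Fin.rev_rev, Fin.rev_castSucc,
      Fin.cons_succ]

lemma rev_bcons {k : ℕ} (a : Fin k → Fin (n+2)) (i : Fin (k+1)) :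
    Fin.rev (bcons 0 (revSeq a) i) = asnoc a i.rev := by
  induction i using Fin.cases with
  | zero => simp [asnoc, bcons, Fin.rev_zero, Fin.snoc_last]
  | succ j =>
    simp only [bcons, Fin.cons_succ, revSeq, Fin.rev_rev, asnoc, Fin.rev_succ,
      Fin.snoc_castSucc]

lemma conj_symm_apply (C : Perm (Fin (n+2))) (x : Fin (n+2)) :
    (w0 n * C * w0 n).symm x = (C.symm x.rev).rev := by
  rw [Equiv.symm_apply_eq]
  simp [Perm.mul_apply]

lemma getLast_cons_ofFn {α : Type*} {h : ℕ} (x : α) (b : Fin h → α) :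
    (x :: List.ofFn b).getLast (List.cons_ne_nil x _)
      = Fin.cons (α := fun _ => α) x b (Fin.last h) := by
  have h1 : (x :: List.ofFn b) = List.ofFn (Fin.cons (α := fun _ => α) x b) := by
    rw [List.ofFn_succ]
    simp
  rw [List.getLast_congr _ (by rw [← h1]; exact List.cons_ne_nil x _) h1]
  exact List.getLast_ofFn_succ _

lemma cycB_symm_zero {h : ℕ} (b : Fin h → Fin (n+2)) :
    (cycB 0 b).symm 0 = bcons 0 b (Fin.last h) := by
  have key := List.formPerm_apply_getLast (0 : Fin (n+2)) (List.ofFn b)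
  rw [getLast_cons_ofFn] at key
  rw [Equiv.symm_apply_eq]
  exact key.symm

/-- Forward direction: conjugation maps `D̄(u,v)` into `D(w₀uw₀, w₀vw₀)`. -/
lemma fwd {u v Bbar Abar : Perm (Fin (n+2))} (hmem : memDbar u v Bbar Abar) :
    memD (w0 n * u * w0 n) (w0 n * v * w0 n) (w0 n * Bbar * w0 n) (w0 n * Abar * w0 n) := by
  obtain ⟨h, k, b, a, rfl, rfl, hB, hA⟩ := hmem
  obtain ⟨hBmono, hBpos, hBumono, hBeq⟩ := hB
  obtain ⟨hAmono, hAlt, hAeq, hAumono⟩ := hA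
  have hapos : ∀ j, 0 < a j := by
    intro j
    rw [Fin.pos_iff_ne_zero]
    intro haj
    have hk0 : 0 < k := lt_of_le_of_lt (Nat.zero_le _) j.isLt
    have h0 : a ⟨0, hk0⟩ = 0 :=
      le_antisymm (haj ▸ hAmono.monotone (by simp [Fin.le_def])) (Fin.zero_le _)
    have hz : asnoc a (0 : Fin (k+1)) = a ⟨0, hk0⟩ := by
      have he : (0 : Fin (k+1)) = Fin.castSucc ⟨0, hk0⟩ := by
        ext; simp
      rw [he, asnoc, Fin.snoc_castSucc]
    rw [hz, h0, cycB_symm_zero, hBeq] at hAeq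
    have := v.symm.injective hAeq
    simp [Fin.ext_iff] at this
  refine ⟨h, k, revSeq b, revSeq a, (w0_mul_cycB b), (w0_mul_cycA a), ?_, ?_⟩
  · refine ⟨revComp_strictMono hBmono, ?_, ?_, ?_⟩
    · intro i
      simp only [revSeq]
      rw [← Fin.rev_zero (n+1), Fin.rev_lt_rev]
      exact hBpos i.rev
    · rw [conj_symm_apply, conj_symm_apply, rev_asnoc, Fin.rev_last, Fin.rev_zero]
      exact congrArg Fin.rev hBeq.symm
    · have key : (fun i : Fin (h+1) => (w0 n * u * w0 n).symm (asnoc (revSeq b) i))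
          = fun i : Fin (h+1) => ((fun j => u.symm (bcons 0 b j)) i.rev).rev := by
        funext i
        rw [conj_symm_apply, rev_asnoc]
      rw [key]
      exact revComp_strictMono hBumono
  · refine ⟨revComp_strictMono hAmono, ?_, ?_, ?_⟩
    · intro i
      constructor
      · simp only [revSeq]
        rw [← Fin.rev_last (n+1), Fin.rev_lt_rev]
        exact hAlt i.rev
      · simp only [revSeq]
        rw [← Fin.rev_zero (n+1), Fin.rev_lt_rev]
        exact hapos i.rev
    · have key : (fun i : Fin (k+1) =>
          (w0 n * u * w0 n).symm ((w0 n * cycB 0 b * w0 n).symm (bcons 0 (revSeq a) i)))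
          = fun i : Fin (k+1) =>
            ((fun j => u.symm ((cycB 0 b).symm (asnoc a j))) i.rev).rev := by
        funext i
        rw [conj_symm_apply, conj_symm_apply, Fin.rev_rev, rev_bcons]
      rw [key]
      exact revComp_strictMono hAumono
    · rw [conj_symm_apply, conj_symm_apply, conj_symm_apply, Fin.rev_rev, rev_bcons,
        Fin.rev_last, Fin.rev_zero]
      exact congrArg Fin.rev hAeq.symm

/-- Backward direction: conjugation maps `D(u,v)` into `D̄(w₀uw₀, w₀vw₀)`. -/
lemma bwd {u v A B : Perm (Fin (n+2))} (hmem : memD u v A B) :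
    memDbar (w0 n * u * w0 n) (w0 n * v * w0 n) (w0 n * A * w0 n) (w0 n * B * w0 n) := by
  obtain ⟨k, h, a, b, rfl, rfl, hA, hB⟩ := hmem
  obtain ⟨hAmono, hAlt, hAeq, hAumono⟩ := hA
  obtain ⟨hBmono, hBbd, hBumono, hBeq⟩ := hB
  refine ⟨k, h, revSeq a, revSeq b, (w0_mul_cycA a), (w0_mul_cycB b), ?_, ?_⟩
  · refine ⟨revComp_strictMono hAmono, ?_, ?_, ?_⟩
    · intro i
      simp only [revSeq]
      rw [← Fin.rev_last (n+1), Fin.rev_lt_rev]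
      exact hAlt i.rev
    · have key : (fun i : Fin (k+1) =>
          (w0 n * u * w0 n).symm (bcons 0 (revSeq a) i))
          = fun i : Fin (k+1) => ((fun j => u.symm (asnoc a j)) i.rev).rev := by
        funext i
        rw [conj_symm_apply, rev_bcons]
      rw [key]
      exact revComp_strictMono hAumono
    · rw [conj_symm_apply, conj_symm_apply, rev_bcons, Fin.rev_last, Fin.rev_zero]
      exact congrArg Fin.rev hAeq.symm
  · refine ⟨revComp_strictMono hBmono, ?_, ?_, ?_⟩
    · intro i
      simp only [revSeq]
      rw [← Fin.rev_zero (n+1), Fin.rev_lt_rev]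
      exact (hBbd i.rev).1
    · rw [conj_symm_apply, conj_symm_apply, conj_symm_apply, Fin.rev_rev, rev_asnoc,
        Fin.rev_zero, Fin.rev_last]
      exact congrArg Fin.rev hBeq.symm
    · have key : (fun i : Fin (h+1) =>
          (w0 n * u * w0 n).symm ((w0 n * cycA a * w0 n).symm (asnoc (revSeq b) i)))
          = fun i : Fin (h+1) =>
            ((fun j => u.symm ((cycA a).symm (bcons 0 b j))) i.rev).rev := by
        funext i
        rw [conj_symm_apply, conj_symm_apply, Fin.rev_rev, rev_asnoc]
      rw [key]
      exact revComp_strictMono hBumono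

lemma w0_conj_conj (C : Perm (Fin (n+2))) : w0 n * (w0 n * C * w0 n) * w0 n = C := by
  have hsq : w0 n * w0 n = 1 := w0_sq
  calc w0 n * (w0 n * C * w0 n) * w0 n = (w0 n * w0 n) * C * (w0 n * w0 n) := by
        simp only [mul_assoc]
    _ = C := by rw [hsq, one_mul, mul_one]

/-- The map `(B̄,Ā) ↦ (w_0·B̄·w_0, w_0·Ā·w_0)` is a bijection from
`D̄(u,v)` onto `D(w_0·u·w_0, w_0·v·w_0)` (the first component playing the role of the
cycle of the form `(n,a_k,…,a_1)`, the second that of the cycle `(1,b_1,…,b_h)`). -/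
theorem statement11 (n : ℕ) (u v : Equiv.Perm (Fin (n+2))) :
    Set.BijOn
      (fun p : Equiv.Perm (Fin (n+2)) × Equiv.Perm (Fin (n+2)) =>
        (w0 n * p.1 * w0 n, w0 n * p.2 * w0 n))
      {p | memDbar u v p.1 p.2}
      {p | memD (w0 n * u * w0 n) (w0 n * v * w0 n) p.1 p.2} := by
  refine ⟨fun p hp => fwd hp, ?_, ?_⟩
  · intro p _ q _ hpq
    have h1 : w0 n * p.1 * w0 n = w0 n * q.1 * w0 n := congrArg Prod.fst hpq
    have h2 : w0 n * p.2 * w0 n = w0 n * q.2 * w0 n := congrArg Prod.snd hpq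
    have e1 : p.1 = q.1 := by
      have := congrArg (fun C => w0 n * C * w0 n) h1
      simpa [w0_conj_conj] using this
    have e2 : p.2 = q.2 := by
      have := congrArg (fun C => w0 n * C * w0 n) h2
      simpa [w0_conj_conj] using this
    exact Prod.ext e1 e2
  · intro q hq
    refine ⟨(w0 n * q.1 * w0 n, w0 n * q.2 * w0 n), ?_, ?_⟩
    · have := bwd hq
      simpa [w0_conj_conj] using this
    · simp [w0_conj_conj]

end DblShortcut
end

section
/- Let (A,B) ∈ D with m ≥ 2 and intersection indices as defined, and let r ∈ {1,…,m−1} be such that i_{r+1} − i_r > 1 and j_{r+1} − j_r = 1. Then u⁻¹(b_{j_{r+1}−1}) < u⁻¹(b_{j_{r+1}}) and b_{j_r+1} > a_{i_r+1}. -/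
/-!
Common setup: the symmetric group `S_n` (`n ≥ 2`) is modeled as `Equiv.Perm (Fin (n+2))`
(so every `n ≥ 2` is of the form `n+2` with `n : ℕ`).  The element `1` of `{1,…,n}` is
`0 : Fin (n+2)` and the element `n` is `Fin.last (n+1)`.
Composition of permutations is multiplication: `(C * C') x = C (C' x)`.
-/

open Equiv

namespace DblShortcut

/-- Let `(A,B) ∈ D` with `m ≥ 2`, and let `r ∈ {1,…,m−1}` be such that
`i_{r+1} − i_r > 1` and `j_{r+1} − j_r = 1`.  Then `u⁻¹(b_{j_{r+1}−1}) < u⁻¹(b_{j_{r+1}})`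
and `b_{j_r+1} > a_{i_r+1}`. -/
theorem statement14 (n : ℕ) (u v : Equiv.Perm (Fin (n+2))) (k h : ℕ)
    (a : Fin k → Fin (n+2)) (b : Fin h → Fin (n+2))
    (hA : DCondA u v a) (hB : DCondB u v (cycA a) b)
    (m : ℕ) (hm : 2 ≤ m) (i j : Fin m → ℕ)
    (hinter : InterD a b i j)
    (r : Fin m) (hr : r.1 + 1 < m)
    (hi : i r + 1 < i ⟨r.1 + 1, hr⟩)
    (hj : j ⟨r.1 + 1, hr⟩ = j r + 1) :
    u.symm (bext b (j ⟨r.1 + 1, hr⟩ - 1)) < u.symm (bext b (j ⟨r.1 + 1, hr⟩)) ∧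
    aext a (i r + 1) < bext b (j r + 1) := by
  obtain ⟨hi_mono, hj_mono, hik, hjh, heq, -⟩ := hinter
  obtain ⟨ha_mono, ha_lt, -, hu_mono⟩ := hA
  set r1 : Fin m := ⟨r.1 + 1, hr⟩ with hr1
  have hiR := hik r
  have hiR1 := hik r1
  have hlt : i r < i r1 := hi_mono (by simp [hr1, Fin.lt_def])
  have eA : ∀ t : ℕ, (h1 : 1 ≤ t) → (h2 : t ≤ k) →
      aext a t = asnoc a ⟨t - 1, by omega⟩ := by
    intro t h1 h2
    have hk : t - 1 < k := by omega
    simp [aext, asnoc, h1, h2, Fin.snoc, hk]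
  constructor
  · have h1 : j r1 - 1 = j r := by omega
    rw [h1, ← heq r, ← heq r1, eA (i r) hiR.1 hiR.2, eA (i r1) hiR1.1 hiR1.2]
    exact hu_mono (show (⟨i r - 1, by omega⟩ : Fin (k+1)) < ⟨i r1 - 1, by omega⟩ by
      simp [Fin.lt_def]; omega)
  · have h2 : bext b (j r + 1) = aext a (i r1) := by rw [← hj, ← heq]
    rw [h2]
    have hirk : i r + 1 ≤ k := by omega
    have e1 : aext a (i r + 1) = a ⟨i r, by omega⟩ := by
      simp [aext, hirk]
    have e2 : aext a (i r1) = a ⟨i r1 - 1, by omega⟩ := by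
      simp [aext, hiR1.1, hiR1.2]
    rw [e1, e2]
    exact ha_mono (show (⟨i r, by omega⟩ : Fin k) < ⟨i r1 - 1, by omega⟩ by
      simp [Fin.lt_def]; omega)

end DblShortcut
end
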